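/- arXiv:1905.11343 — 3 statements merged into one kernel-verified Lean document; each statement's English description precedes it below -/
import Mathlib

section
/- The function g_∞(v) = 2 / (π D [1 + ((v − V)/D)²]²), with D > 0 and V ∈ ℝ, is a probability density on ℝ with mean V and variance D². -/
/-!
Substituting `v = V + D u` reduces everything to the standard density
`φ u = 2 / (π (1 + u²)²)`. Since `(u / (1 + u²))' = π φ u - (1 + u²)⁻¹` and
`u / (1 + u²)` vanishes at `±∞`, `∫ φ = π⁻¹ ∫ (1 + u²)⁻¹ = 1`; then
`u² φ u = 2 / (π (1 + u²)) - φ u` gives `∫ u² φ = 2 - 1 = 1`, and `∫ u φ = 0`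
because `u φ u` is odd.
-/

open MeasureTheory Real Filter Topology

/-- The density of `T / √3` for `T` Student-t with 3 degrees of freedom. -/
noncomputable def sqCauchyDensity (u : ℝ) : ℝ := 2 / (π * (1 + u ^ 2) ^ 2)

lemma sqCauchyDensity_nonneg (u : ℝ) : 0 ≤ sqCauchyDensity u := by
  unfold sqCauchyDensity
  positivity

lemma continuous_sqCauchyDensity : Continuous sqCauchyDensity :=
  continuous_const.div (by fun_prop) fun u => by positivity

lemma sqCauchyDensity_neg (u : ℝ) : sqCauchyDensity (-u) = sqCauchyDensity u := by
  simp [sqCauchyDensity]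

lemma integrable_pow_mul_sqCauchyDensity {k : ℕ} (hk : k ≤ 2) :
    Integrable fun u => u ^ k * sqCauchyDensity u := by
  refine (integrable_inv_one_add_sq.const_mul (2 / π)).mono'
    ((continuous_pow k).mul continuous_sqCauchyDensity).aestronglyMeasurable
    (Eventually.of_forall fun u => ?_)
  have hpow : |u| ^ k ≤ 1 + u ^ 2 := by
    interval_cases k <;> nlinarith [abs_nonneg u, sq_abs u]
  rw [norm_mul, norm_pow, Real.norm_eq_abs, Real.norm_eq_abs,
    abs_of_nonneg (sqCauchyDensity_nonneg u), sqCauchyDensity]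
  calc |u| ^ k * (2 / (π * (1 + u ^ 2) ^ 2))
      ≤ (1 + u ^ 2) * (2 / (π * (1 + u ^ 2) ^ 2)) := by gcongr
    _ = 2 / π * (1 + u ^ 2)⁻¹ := by field_simp

lemma integrable_sqCauchyDensity : Integrable sqCauchyDensity := by
  simpa using integrable_pow_mul_sqCauchyDensity (k := 0) (by norm_num)

lemma tendsto_div_one_add_sq_cocompact :
    Tendsto (fun x : ℝ => x / (1 + x ^ 2)) (cocompact ℝ) (𝓝 0) := by
  have hbound : ∀ x : ℝ, ‖x / (1 + x ^ 2)‖ ≤ 2 * (1 + ‖x‖)⁻¹ := fun x => by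
    rw [norm_div, Real.norm_eq_abs, Real.norm_eq_abs, abs_of_pos (by positivity : 0 < 1 + x ^ 2),
      ← div_eq_mul_inv, div_le_div_iff₀ (by positivity) (by positivity)]
    nlinarith [abs_nonneg x, sq_abs x]
  have hdecay : Tendsto (fun x : ℝ => 2 * (1 + ‖x‖)⁻¹) (cocompact ℝ) (𝓝 0) := by
    have hnorm := tendsto_atTop_add_const_left _ 1 (tendsto_norm_cocompact_atTop (E := ℝ))
    simpa using hnorm.inv_tendsto_atTop.const_mul 2
  exact squeeze_zero_norm hbound hdecay

lemma hasDerivAt_div_one_add_sq (x : ℝ) :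
    HasDerivAt (fun x : ℝ => x / (1 + x ^ 2)) ((1 - x ^ 2) / (1 + x ^ 2) ^ 2) x := by
  have hden : HasDerivAt (fun x : ℝ => 1 + x ^ 2) (2 * x) x := by
    simpa using (hasDerivAt_pow 2 x).const_add 1
  exact ((hasDerivAt_id' x).div hden (by positivity)).congr_deriv (by ring)

lemma integral_sqCauchyDensity : ∫ u, sqCauchyDensity u = 1 := by
  have hderiv (u : ℝ) : HasDerivAt (fun u : ℝ => u / (1 + u ^ 2))
      (π * sqCauchyDensity u - (1 + u ^ 2)⁻¹) u := by
    convert hasDerivAt_div_one_add_sq u using 1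
    rw [sqCauchyDensity]
    field_simp
    ring
  have hint : Integrable fun u => π * sqCauchyDensity u - (1 + u ^ 2)⁻¹ :=
    (integrable_sqCauchyDensity.const_mul π).sub integrable_inv_one_add_sq
  have h := integral_of_hasDerivAt_of_tendsto hderiv hint
    (tendsto_div_one_add_sq_cocompact.mono_left atBot_le_cocompact)
    (tendsto_div_one_add_sq_cocompact.mono_left atTop_le_cocompact)
  rw [integral_sub (integrable_sqCauchyDensity.const_mul π) integrable_inv_one_add_sq,
    integral_const_mul, integral_univ_inv_one_add_sq, sub_self, ← mul_sub_one] at h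
  linarith [(mul_eq_zero.mp h).resolve_left pi_ne_zero]

lemma integral_mul_sqCauchyDensity : ∫ u, u * sqCauchyDensity u = 0 := by
  have h := integral_neg_eq_self (fun u => u * sqCauchyDensity u) volume
  simp only [sqCauchyDensity_neg, neg_mul, integral_neg] at h
  linarith

lemma integral_sq_mul_sqCauchyDensity : ∫ u, u ^ 2 * sqCauchyDensity u = 1 := by
  have hsplit : (fun u => u ^ 2 * sqCauchyDensity u)
      = fun u => 2 / π * (1 + u ^ 2)⁻¹ - sqCauchyDensity u := by
    funext u
    rw [sqCauchyDensity]
    field_simp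
    ring
  rw [hsplit, integral_sub (integrable_inv_one_add_sq.const_mul _) integrable_sqCauchyDensity,
    integral_const_mul, integral_univ_inv_one_add_sq, integral_sqCauchyDensity]
  field_simp
  norm_num

lemma integral_mul_comp_sub_div (F φ : ℝ → ℝ) (V : ℝ) {D : ℝ} (hD : 0 < D) :
    ∫ v, F v * (φ ((v - V) / D) / D) = ∫ u, F (V + D * u) * φ u := by
  set G : ℝ → ℝ := fun u => F (V + D * u) * φ u
  have hG (v : ℝ) : F v * (φ ((v - V) / D) / D) = D⁻¹ * G ((v - V) / D) := by
    simp only [G]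
    rw [show V + D * ((v - V) / D) = v by field_simp; ring]
    ring
  simp_rw [hG]
  rw [integral_const_mul, integral_sub_right_eq_self (fun v => G (v / D)) V,
    Measure.integral_comp_div, abs_of_pos hD, smul_eq_mul, inv_mul_cancel_left₀ hD.ne']

/-- g_∞(v) = 2/(πD[1+((v−V)/D)²]²) is a probability density with mean V and
variance D². -/
theorem stmt_9
    (V D : ℝ) (hD : 0 < D)
    (g : ℝ → ℝ)
    (hg : ∀ v, g v = 2 / (π * D * (1 + ((v - V) / D) ^ 2) ^ 2)) :
    (∀ v, 0 ≤ g v) ∧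
    Integrable g ∧
    (∫ v, g v = 1) ∧
    (∫ v, v * g v = V) ∧
    (∫ v, (v - V) ^ 2 * g v = D ^ 2) := by
  have hg' : g = fun v => sqCauchyDensity ((v - V) / D) / D := by
    funext v
    rw [hg, sqCauchyDensity]
    field_simp
  have hmoment (F : ℝ → ℝ) : ∫ v, F v * g v = ∫ u, F (V + D * u) * sqCauchyDensity u :=
    hg' ▸ integral_mul_comp_sub_div F sqCauchyDensity V hD
  refine ⟨fun v => by rw [hg]; positivity, ?_, ?_, ?_, ?_⟩
  · rw [hg']
    exact ((integrable_sqCauchyDensity.comp_div hD.ne').comp_sub_right V).div_const D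
  · simpa [integral_sqCauchyDensity] using hmoment 1
  · simp only [hmoment fun v => v, add_mul, mul_assoc]
    rw [integral_add (integrable_sqCauchyDensity.const_mul V)
        (by simpa using (integrable_pow_mul_sqCauchyDensity (k := 1) (by norm_num)).const_mul D),
      integral_const_mul, integral_const_mul, integral_sqCauchyDensity,
      integral_mul_sqCauchyDensity]
    ring
  · simp only [hmoment (fun v => (v - V) ^ 2), add_sub_cancel_left, mul_pow, mul_assoc]
    rw [integral_const_mul, integral_sq_mul_sqCauchyDensity, mul_one]
end

section
/- The probability density g_∞(v) = 2/(π D [1 + ((v−V)/D)²]²) solves the stationary Fokker–Planck equation (1/2) d/dv [((V − v)² + D²) g_∞(v)] − (V − v) g_∞(v) = 0 on ℝ. -/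
open Real

/-! With `C = 2 D³ / π` the density is `g = C / ((v - V)² + D²)²`, so the flux
`((V - v)² + D²) g` is the Cauchy profile `C / ((v - V)² + D²)`, whose derivative is
`-2 (v - V) C / ((v - V)² + D²)² = 2 (V - v) g`. -/

lemma sq_add_sq_ne_zero_of_ne_zero (x : ℝ) {D : ℝ} (hD : D ≠ 0) : x ^ 2 + D ^ 2 ≠ 0 := by
  positivity

lemma div_mul_one_add_div_sq_sq (c x : ℝ) {D : ℝ} (hD : D ≠ 0) :
    c / (D * (1 + (x / D) ^ 2) ^ 2) = c * D ^ 3 / (x ^ 2 + D ^ 2) ^ 2 := by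
  have := sq_add_sq_ne_zero_of_ne_zero x hD
  field_simp
  ring

lemma hasDerivAt_div_sub_sq_add_sq (C a v : ℝ) {D : ℝ} (hD : D ≠ 0) :
    HasDerivAt (fun w => C / ((w - a) ^ 2 + D ^ 2))
      (-(2 * (v - a)) * (C / ((v - a) ^ 2 + D ^ 2) ^ 2)) v := by
  have hq : HasDerivAt (fun w => (w - a) ^ 2 + D ^ 2) (2 * (v - a)) v := by
    simpa using (((hasDerivAt_id v).sub_const a).pow 2).add_const (D ^ 2)
  exact ((hasDerivAt_const v C).fun_div hq (sq_add_sq_ne_zero_of_ne_zero (v - a) hD)).congr_deriv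
    (by ring)

/-- g_∞ solves the stationary Fokker–Planck equation
(1/2) d/dv[((V−v)² + D²) g_∞] − (V−v) g_∞ = 0, i.e. the derivative of
((V−v)² + D²) g_∞ at v equals 2(V−v) g_∞(v). -/
theorem stmt_10
    (V D : ℝ) (hD : 0 < D)
    (g : ℝ → ℝ)
    (hg : ∀ v, g v = 2 / (π * D * (1 + ((v - V) / D) ^ 2) ^ 2)) :
    ∀ v : ℝ, HasDerivAt (fun w => ((V - w) ^ 2 + D ^ 2) * g w)
      (2 * ((V - v) * g v)) v := by
  intro v
  set C := 2 * D ^ 3 / π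
  have hg_eq : ∀ w, g w = C / ((w - V) ^ 2 + D ^ 2) ^ 2 := fun w => by
    rw [hg, mul_assoc, ← div_div, div_mul_one_add_div_sq_sq _ _ hD.ne']
    ring
  have hflux : (fun w => ((V - w) ^ 2 + D ^ 2) * g w) = fun w => C / ((w - V) ^ 2 + D ^ 2) := by
    funext w
    have := sq_add_sq_ne_zero_of_ne_zero (w - V) hD.ne'
    rw [hg_eq, sub_sq_comm V w]
    field_simp
  rw [hflux]
  exact (hasDerivAt_div_sub_sq_add_sq C V v hD.ne').congr_deriv (by rw [hg_eq]; ring)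
end

section
/- For m ∈ ℝ and σ > 0, the density g_∞(v) = 2σ³ / (π[(v−m)² + σ²]²) is the unique probability-density solution of the stationary equation (1/2) d/dv [((v−m)² + σ²) g] − (m−v) g = 0, and it has mean m and variance σ². -/
open MeasureTheory Real Filter Topology

/-!
Writing `q(v) = (v - m)² + σ²`, the equation says `(q g)' = -q' g`, hence `(q · q g)' = 0`: every
solution is a constant multiple of `q⁻²`, and unit mass fixes the constant. For the moments,
integrating `(u / (u² + σ²))' = 2σ² (u² + σ²)⁻² - (u² + σ²)⁻¹` over `ℝ` turns
`∫ (u² + σ²)⁻¹ = π / σ` into `∫ (u² + σ²)⁻² = π / (2σ³)`; the first central moment vanishes by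
oddness, and `u² (u² + σ²)⁻² = (u² + σ²)⁻¹ - σ² (u² + σ²)⁻²` gives the second.
-/

section
variable {σ : ℝ}

lemma integral_univ_inv_sq_add_sq (hσ : 0 < σ) : ∫ u : ℝ, (u ^ 2 + σ ^ 2)⁻¹ = π / σ := by
  have h (u : ℝ) : (u ^ 2 + σ ^ 2)⁻¹ = (σ ^ 2)⁻¹ * (1 + (u / σ) ^ 2)⁻¹ := by
    field_simp
    ring
  simp_rw [h]
  rw [integral_const_mul, Measure.integral_comp_div (fun x => (1 + x ^ 2)⁻¹),
    integral_univ_inv_one_add_sq, abs_of_pos hσ, smul_eq_mul]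
  field_simp

lemma integrable_inv_sq_add_sq (hσ : 0 < σ) : Integrable fun u : ℝ => (u ^ 2 + σ ^ 2)⁻¹ :=
  Integrable.of_integral_ne_zero <| by rw [integral_univ_inv_sq_add_sq hσ]; positivity

lemma integrable_inv_sq_add_sq_sq (hσ : 0 < σ) :
    Integrable fun u : ℝ => ((u ^ 2 + σ ^ 2) ^ 2)⁻¹ := by
  refine ((integrable_inv_sq_add_sq hσ).const_mul (σ ^ 2)⁻¹).mono' (by fun_prop)
    (ae_of_all _ fun u => ?_)
  rw [norm_inv, norm_pow, Real.norm_of_nonneg (by positivity), ← mul_inv, sq]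
  gcongr
  nlinarith [sq_nonneg u]

lemma integrable_mul_inv_sq_add_sq_sq (hσ : 0 < σ) :
    Integrable fun u : ℝ => u * ((u ^ 2 + σ ^ 2) ^ 2)⁻¹ := by
  refine ((integrable_inv_sq_add_sq hσ).const_mul (2 * σ)⁻¹).mono' (by fun_prop)
    (ae_of_all _ fun u => ?_)
  have hq : 0 < u ^ 2 + σ ^ 2 := by positivity
  calc ‖u * ((u ^ 2 + σ ^ 2) ^ 2)⁻¹‖ = |u| * ((u ^ 2 + σ ^ 2) ^ 2)⁻¹ := by
        rw [norm_mul, Real.norm_eq_abs, Real.norm_of_nonneg (by positivity)]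
    _ ≤ (u ^ 2 + σ ^ 2) / (2 * σ) * ((u ^ 2 + σ ^ 2) ^ 2)⁻¹ := by
        gcongr
        rw [le_div_iff₀ (by positivity)]
        nlinarith [sq_abs u, sq_nonneg (|u| - σ)]
    _ = (2 * σ)⁻¹ * (u ^ 2 + σ ^ 2)⁻¹ := by field_simp

lemma tendsto_div_sq_add_sq_cocompact :
    Tendsto (fun u : ℝ => u / (u ^ 2 + σ ^ 2)) (cocompact ℝ) (𝓝 0) := by
  refine squeeze_zero_norm' ?_ (tendsto_norm_cocompact_atTop.inv_tendsto_atTop)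
  filter_upwards [tendsto_norm_cocompact_atTop.eventually_gt_atTop 0] with u hu
  rw [Real.norm_eq_abs] at hu ⊢
  calc |u / (u ^ 2 + σ ^ 2)| = |u| / (|u| ^ 2 + σ ^ 2) := by
        rw [abs_div, abs_of_nonneg (by positivity : 0 ≤ u ^ 2 + σ ^ 2), sq_abs]
    _ ≤ |u| / |u| ^ 2 := by gcongr; nlinarith [sq_nonneg σ]
    _ = |u|⁻¹ := by field_simp

lemma hasDerivAt_div_sq_add_sq (hσ : σ ≠ 0) (u : ℝ) :
    HasDerivAt (fun u : ℝ => u / (u ^ 2 + σ ^ 2))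
      (2 * σ ^ 2 * ((u ^ 2 + σ ^ 2) ^ 2)⁻¹ - (u ^ 2 + σ ^ 2)⁻¹) u := by
  have hq : u ^ 2 + σ ^ 2 ≠ 0 := by positivity
  refine ((hasDerivAt_id' u).div ((hasDerivAt_pow 2 u).add_const (σ ^ 2)) hq).congr_deriv ?_
  field_simp
  ring

lemma integral_inv_sq_add_sq_sq (hσ : 0 < σ) :
    ∫ u : ℝ, ((u ^ 2 + σ ^ 2) ^ 2)⁻¹ = π / (2 * σ ^ 3) := by
  have h := integral_of_hasDerivAt_of_tendsto (hasDerivAt_div_sq_add_sq hσ.ne')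
    (((integrable_inv_sq_add_sq_sq hσ).const_mul _).sub (integrable_inv_sq_add_sq hσ))
    (tendsto_div_sq_add_sq_cocompact.mono_left atBot_le_cocompact)
    (tendsto_div_sq_add_sq_cocompact.mono_left atTop_le_cocompact)
  rw [integral_sub ((integrable_inv_sq_add_sq_sq hσ).const_mul _) (integrable_inv_sq_add_sq hσ),
    integral_const_mul, integral_univ_inv_sq_add_sq hσ, sub_self, sub_eq_zero] at h
  rw [eq_div_iff (by positivity), ← div_mul_cancel₀ π hσ.ne', ← h]
  ring

lemma integral_mul_inv_sq_add_sq_sq : ∫ u : ℝ, u * ((u ^ 2 + σ ^ 2) ^ 2)⁻¹ = 0 := by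
  have h := integral_neg_eq_self (fun u : ℝ => u * ((u ^ 2 + σ ^ 2) ^ 2)⁻¹) volume
  simp only [neg_sq, neg_mul, integral_neg] at h
  linarith

lemma integral_sq_mul_inv_sq_add_sq_sq (hσ : 0 < σ) :
    ∫ u : ℝ, u ^ 2 * ((u ^ 2 + σ ^ 2) ^ 2)⁻¹ = π / (2 * σ) := by
  have h (u : ℝ) : u ^ 2 * ((u ^ 2 + σ ^ 2) ^ 2)⁻¹
      = (u ^ 2 + σ ^ 2)⁻¹ - σ ^ 2 * ((u ^ 2 + σ ^ 2) ^ 2)⁻¹ := by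
    have hq : u ^ 2 + σ ^ 2 ≠ 0 := by positivity
    field_simp
    ring
  simp_rw [h]
  rw [integral_sub (integrable_inv_sq_add_sq hσ) ((integrable_inv_sq_add_sq_sq hσ).const_mul _),
    integral_const_mul, integral_univ_inv_sq_add_sq hσ, integral_inv_sq_add_sq_sq hσ]
  field_simp
  ring

end

theorem sq_mul_eq_of_hasDerivAt_mul_eq_neg {q q' f : ℝ → ℝ}
    (hq : ∀ v, HasDerivAt q (q' v) v)
    (hf : ∀ v, HasDerivAt (fun w => q w * f w) (-(q' v * f v)) v) (a b : ℝ) :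
    q a ^ 2 * f a = q b ^ 2 * f b := by
  have hderiv (v : ℝ) : HasDerivAt (fun w => q w * (q w * f w)) 0 v :=
    ((hq v).mul (hf v)).congr_deriv (by ring)
  have := is_const_of_deriv_eq_zero (fun v => (hderiv v).differentiableAt)
    (fun v => (hderiv v).deriv) a b
  simpa only [sq, mul_assoc] using this

noncomputable def stationaryDensity (m σ v : ℝ) : ℝ :=
  2 * σ ^ 3 / (π * ((v - m) ^ 2 + σ ^ 2) ^ 2)

lemma stationaryDensity_eq (m σ v : ℝ) :
    stationaryDensity m σ v = 2 * σ ^ 3 / π * (((v - m) ^ 2 + σ ^ 2) ^ 2)⁻¹ := by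
  rw [stationaryDensity, ← div_div, div_eq_mul_inv]

lemma hasDerivAt_sub_sq_add_sq (m σ v : ℝ) :
    HasDerivAt (fun w => (w - m) ^ 2 + σ ^ 2) (2 * (v - m)) v := by
  simpa using (((hasDerivAt_id' v).sub_const m).pow 2).add_const (σ ^ 2)

section
variable {m σ : ℝ}

lemma stationaryDensity_nonneg (hσ : 0 ≤ σ) (v : ℝ) : 0 ≤ stationaryDensity m σ v := by
  rw [stationaryDensity]
  positivity

lemma integral_stationaryDensity (hσ : 0 < σ) : ∫ v, stationaryDensity m σ v = 1 := by
  rw [← integral_add_right_eq_self _ m]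
  simp only [stationaryDensity_eq, add_sub_cancel_right]
  rw [integral_const_mul, integral_inv_sq_add_sq_sq hσ]
  field_simp

lemma integrable_stationaryDensity (hσ : 0 < σ) : Integrable (stationaryDensity m σ) :=
  Integrable.of_integral_ne_zero <| by rw [integral_stationaryDensity hσ]; exact one_ne_zero

lemma integral_mul_stationaryDensity (hσ : 0 < σ) : ∫ v, v * stationaryDensity m σ v = m := by
  have h (u : ℝ) : (u + m) * stationaryDensity m σ (u + m)
      = 2 * σ ^ 3 / π * (u * ((u ^ 2 + σ ^ 2) ^ 2)⁻¹)
        + m * (2 * σ ^ 3 / π * ((u ^ 2 + σ ^ 2) ^ 2)⁻¹) := by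
    rw [stationaryDensity_eq, add_sub_cancel_right]
    ring
  rw [← integral_add_right_eq_self _ m]
  simp only [h]
  rw [integral_add ((integrable_mul_inv_sq_add_sq_sq hσ).const_mul _)
      (((integrable_inv_sq_add_sq_sq hσ).const_mul _).const_mul _),
    integral_const_mul, integral_mul_inv_sq_add_sq_sq, integral_const_mul, integral_const_mul,
    integral_inv_sq_add_sq_sq hσ]
  field_simp
  ring

lemma integral_sub_sq_mul_stationaryDensity (hσ : 0 < σ) :
    ∫ v, (v - m) ^ 2 * stationaryDensity m σ v = σ ^ 2 := by
  rw [← integral_add_right_eq_self _ m]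
  simp only [stationaryDensity_eq, add_sub_cancel_right, mul_left_comm _ (2 * σ ^ 3 / π)]
  rw [integral_const_mul, integral_sq_mul_inv_sq_add_sq_sq hσ]
  field_simp

lemma hasDerivAt_mul_stationaryDensity (hσ : σ ≠ 0) (v : ℝ) :
    HasDerivAt (fun w => ((w - m) ^ 2 + σ ^ 2) * stationaryDensity m σ w)
      (2 * ((m - v) * stationaryDensity m σ v)) v := by
  have hq (w : ℝ) : (w - m) ^ 2 + σ ^ 2 ≠ 0 := by positivity
  have hfun : (fun w => ((w - m) ^ 2 + σ ^ 2) * stationaryDensity m σ w)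
      = fun w => 2 * σ ^ 3 / π * ((w - m) ^ 2 + σ ^ 2)⁻¹ := by
    funext w
    rw [stationaryDensity_eq]
    field_simp
  rw [hfun, stationaryDensity_eq]
  refine (((hasDerivAt_sub_sq_add_sq m σ v).inv (hq v)).const_mul _).congr_deriv ?_
  field_simp
  ring

theorem eq_stationaryDensity_of_hasDerivAt (hσ : 0 < σ) {g : ℝ → ℝ} (hg1 : ∫ v, g v = 1)
    (hg : ∀ v, HasDerivAt (fun w => ((w - m) ^ 2 + σ ^ 2) * g w) (2 * ((m - v) * g v)) v) :
    g = stationaryDensity m σ := by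
  have hconst (v : ℝ) : ((v - m) ^ 2 + σ ^ 2) ^ 2 * g v = σ ^ 4 * g m := by
    have := sq_mul_eq_of_hasDerivAt_mul_eq_neg (hasDerivAt_sub_sq_add_sq m σ)
      (fun v => (hg v).congr_deriv (by ring)) v m
    simpa [← pow_mul] using this
  set K := σ * g m * π / 2
  have hgK : g = fun v => K * stationaryDensity m σ v := by
    funext v
    have hσ0 : σ ≠ 0 := hσ.ne'
    have hq : (v - m) ^ 2 + σ ^ 2 ≠ 0 := by positivity
    rw [stationaryDensity_eq]
    field_simp
    linear_combination π * hconst v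
  have hK : K = 1 := by
    rwa [hgK, integral_const_mul, integral_stationaryDensity hσ, mul_one] at hg1
  rw [hgK, hK]
  simp
end

/-- g_∞(v) = 2σ³/(π[(v−m)²+σ²]²) is the unique probability-density solution of
(1/2) d/dv[((v−m)²+σ²)g] − (m−v)g = 0, with mean m and variance σ². -/
theorem stmt_14
    (m σ : ℝ) (hσ : 0 < σ)
    (ginf : ℝ → ℝ)
    (hginf : ∀ v, ginf v = 2 * σ ^ 3 / (π * ((v - m) ^ 2 + σ ^ 2) ^ 2)) :
    (∀ v, 0 ≤ ginf v) ∧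
    Integrable ginf ∧
    (∫ v, ginf v = 1) ∧
    -- ginf solves the stationary equation
    (∀ v : ℝ, HasDerivAt (fun w => ((w - m) ^ 2 + σ ^ 2) * ginf w)
      (2 * ((m - v) * ginf v)) v) ∧
    (∫ v, v * ginf v = m) ∧
    (∫ v, (v - m) ^ 2 * ginf v = σ ^ 2) ∧
    -- uniqueness among integrable solutions of unit mass
    (∀ g : ℝ → ℝ, Integrable g → (∫ v, g v = 1) →
      (∀ v : ℝ, HasDerivAt (fun w => ((w - m) ^ 2 + σ ^ 2) * g w)
        (2 * ((m - v) * g v)) v) →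
      g = ginf) := by
  obtain rfl : ginf = stationaryDensity m σ := funext hginf
  exact ⟨stationaryDensity_nonneg hσ.le, integrable_stationaryDensity hσ,
    integral_stationaryDensity hσ, hasDerivAt_mul_stationaryDensity hσ.ne',
    integral_mul_stationaryDensity hσ, integral_sub_sq_mul_stationaryDensity hσ,
    fun _ _ hg1 hg => eq_stationaryDensity_of_hasDerivAt hσ hg1 hg⟩
end
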